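/- Let $\mu$ be a critical offspring distribution with finite variance $\sigma^2>0$ and $\mu(0)>0$, and let $(\tau_\infty, U_\infty)$ be the size-biased Bienaymé tree with offspring distribution $\mu$, with spine $U_0=\varnothing, U_1, U_2,\dots$. Then the trees $\operatorname{Trim}_{U_n}\tau_\infty$, $n\ge 1$, are independent and each distributed as a root-biased Bienaymé tree with offspring distribution $\mu$. -/

import Mathlib

inductive PlaneTree : Type where
  | node : List PlaneTree → PlaneTree

instance : MeasurableSpace PlaneTree := ⊤

namespace PlaneTree

mutual
def size : PlaneTree → ℕ
  | .node ts => 1 + sizeF ts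
def sizeF : List PlaneTree → ℕ
  | [] => 0
  | t :: ts => size t + sizeF ts
end

mutual
def height : PlaneTree → ℕ
  | .node ts => heightF ts
def heightF : List PlaneTree → ℕ
  | [] => 0
  | t :: ts => max (height t + 1) (heightF ts)
end

mutual
def maxDeg : PlaneTree → ℕ
  | .node ts => max ts.length (maxDegF ts)
def maxDegF : List PlaneTree → ℕ
  | [] => 0
  | t :: ts => max (maxDeg t) (maxDegF ts)
end

mutual
def treeProb (μ : ℕ → ℝ) : PlaneTree → ℝ
  | .node ts => μ ts.length * forestProb μ ts
def forestProb (μ : ℕ → ℝ) : List PlaneTree → ℝ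
  | [] => 1
  | t :: ts => treeProb μ t * forestProb μ ts
end

/-- Law of a root-biased Bienaymé tree. -/
def rootBiasedProb (μ : ℕ → ℝ) : PlaneTree → ℝ
  | .node ts => (ts.length + 1 : ℝ) * μ (ts.length + 1) * forestProb μ ts

/-- Root-preserving embedding of plane trees (ignoring the plane order). -/
inductive Embeds : PlaneTree → PlaneTree → Prop where
  | intro (ss ts : List PlaneTree) (f : Fin ss.length → Fin ts.length)
      (hinj : Function.Injective f)
      (h : ∀ i, Embeds (ss.get i) (ts.get (f i))) :
      Embeds (.node ss) (.node ts)

/-- Maximum size of a common rooted subtree. -/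
noncomputable def LCSr (t t' : PlaneTree) : ℕ :=
  sSup {n | ∃ s : PlaneTree, s.size = n ∧ s.Embeds t ∧ s.Embeds t'}

end PlaneTree

open MeasureTheory ProbabilityTheory PlaneTree

/-- The tree `Trim_{U_n} τ_∞`: the off-spine children subtrees at spine level
`n-1` (given by `W (n-1) ·`), omitting the spine child of index `J n`, attached
to a common root. -/
def trimAt {Ω : Type*} (K J : ℕ → Ω → ℕ) (W : ℕ → ℕ → Ω → PlaneTree)
    (n : ℕ) (ω : Ω) : PlaneTree :=
  PlaneTree.node
    (((List.range (K (n - 1) ω)).filter (fun j => j + 1 ≠ J n ω)).map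
      (fun j => W (n - 1) j ω))

section Aux

open MeasureTheory ProbabilityTheory PlaneTree

namespace PlaneTree

lemma measurableSet_all (s : Set PlaneTree) : MeasurableSet s := trivial

instance : MeasurableSingletonClass PlaneTree := ⟨fun _ => trivial⟩

mutual
def enc : PlaneTree → ℕ
  | .node ts => encL ts
def encL : List PlaneTree → ℕ
  | [] => 0
  | t :: ts => Nat.pair (enc t) (encL ts) + 1
end

mutual
theorem enc_inj : ∀ t t' : PlaneTree, enc t = enc t' → t = t'
  | .node ts, .node ts', h => by
    have h' : encL ts = encL ts' := by simpa [enc] using h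
    exact congrArg PlaneTree.node (encL_inj ts ts' h')
theorem encL_inj : ∀ l l' : List PlaneTree, encL l = encL l' → l = l'
  | [], [], _ => rfl
  | [], _ :: _, h => by simp [encL] at h
  | _ :: _, [], h => by simp [encL] at h
  | t :: ts, t' :: ts', h => by
    have h' : Nat.pair (enc t) (encL ts) = Nat.pair (enc t') (encL ts') := by
      simpa [encL] using h
    obtain ⟨h1, h2⟩ := Nat.pair_eq_pair.mp h'
    rw [enc_inj t t' h1, encL_inj ts ts' h2]
end

instance : Countable PlaneTree := ⟨⟨enc, fun a b h => enc_inj a b h⟩⟩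

mutual
theorem treeProb_nonneg (μ : ℕ → ℝ) (hnn : ∀ k, 0 ≤ μ k) : ∀ t, 0 ≤ treeProb μ t
  | .node ts => by
    rw [treeProb]
    exact mul_nonneg (hnn _) (forestProb_nonneg μ hnn ts)
theorem forestProb_nonneg (μ : ℕ → ℝ) (hnn : ∀ k, 0 ≤ μ k) : ∀ l, 0 ≤ forestProb μ l
  | [] => by rw [forestProb]; exact zero_le_one
  | t :: ts => by
    rw [forestProb]
    exact mul_nonneg (treeProb_nonneg μ hnn t) (forestProb_nonneg μ hnn ts)
end

theorem ofReal_forestProb (μ : ℕ → ℝ) (hnn : ∀ k, 0 ≤ μ k) : ∀ ts : List PlaneTree,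
    ENNReal.ofReal (forestProb μ ts) =
      ∏ i ∈ Finset.range ts.length, ENNReal.ofReal (treeProb μ (ts.getD i (node [])))
  | [] => by simp [forestProb]
  | t :: ts => by
    rw [forestProb, ENNReal.ofReal_mul (treeProb_nonneg μ hnn t), ofReal_forestProb μ hnn ts,
      List.length_cons, Finset.prod_range_succ']
    simp [mul_comm]

end PlaneTree

end Aux
section Aux2

open MeasureTheory ProbabilityTheory PlaneTree

/-- The position in the original sibling list of the `i`-th remaining sibling,
when the `j`-th child (1-based) is removed. -/
def sigmaIdx (j i : ℕ) : ℕ := if i + 1 < j then i else i + 1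

def tauIdx (j a : ℕ) : ℕ := if a + 1 < j then a else a - 1

lemma tauIdx_sigmaIdx (j i : ℕ) : tauIdx j (sigmaIdx j i) = i := by
  unfold sigmaIdx tauIdx; split_ifs <;> omega

lemma sigmaIdx_injective (j : ℕ) : Function.Injective (sigmaIdx j) := by
  intro a b; unfold sigmaIdx; split_ifs <;> omega

lemma range_filter_eq (j m : ℕ) (h1 : 1 ≤ j) (h2 : j ≤ m + 1) :
    (List.range (m + 1)).filter (fun i => i + 1 ≠ j) = (List.range m).map (sigmaIdx j) := by
  induction m with
  | zero =>
    have hj : j = 1 := by omega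
    subst hj
    simp [List.range_succ]
  | succ m ih =>
    rcases Nat.lt_or_ge j (m + 2) with hj | hj
    · have hj' : j ≤ m + 1 := by omega
      rw [List.range_succ (n := m + 1), List.filter_append, ih hj',
        List.range_succ (n := m), List.map_append]
      congr 1
      have hne : m + 1 + 1 ≠ j := by omega
      simp [List.filter, hne, sigmaIdx, show ¬ (m + 1 < j) by omega]
    · have hj' : j = m + 2 := by omega
      subst hj'
      rw [List.range_succ (n := m + 1), List.filter_append]
      have h3 : (List.range (m + 1)).filter (fun i => i + 1 ≠ m + 2) = List.range (m + 1) := by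
        apply List.filter_eq_self.mpr
        intro a ha
        have := List.mem_range.mp ha
        simp; omega
      have h4 : (List.range (m + 1)).map (sigmaIdx (m + 2)) = List.range (m + 1) := by
        have : ∀ a ∈ List.range (m + 1), sigmaIdx (m + 2) a = a := by
          intro a ha
          have := List.mem_range.mp ha
          simp [sigmaIdx]; omega
        rw [List.map_congr_left this]
        simp
      rw [h3, h4]
      simp

variable {Ω : Type*}

/-- The event that the spine data at level `n` equals `(ts.length + 1, j)` and the
off-spine subtrees match `ts`. -/
def Pset (K J : ℕ → Ω → ℕ) (W : ℕ → ℕ → Ω → PlaneTree) (n j : ℕ) (ts : List PlaneTree) :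
    Set Ω :=
  {ω | K n ω = ts.length + 1 ∧ J (n + 1) ω = j ∧
    ∀ i, ∀ hi : i < ts.length, W n (sigmaIdx j i) ω = ts[i]}

lemma trim_inter_eq (K J : ℕ → Ω → ℕ) (W : ℕ → ℕ → Ω → PlaneTree) (n : ℕ)
    (ts : List PlaneTree) :
    {ω | trimAt K J W (n + 1) ω = PlaneTree.node ts} ∩
        {ω | 1 ≤ J (n + 1) ω ∧ J (n + 1) ω ≤ K n ω} =
      ⋃ j ∈ Finset.Icc 1 (ts.length + 1), Pset K J W n j ts := by
  ext ω
  simp only [Set.mem_inter_iff, Set.mem_setOf_eq, Set.mem_iUnion, Finset.mem_Icc, Pset,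
    trimAt, Nat.add_sub_cancel, PlaneTree.node.injEq]
  constructor
  · rintro ⟨htrim, h1, h2⟩
    have hk : K n ω - 1 + 1 = K n ω := by omega
    rw [← hk, range_filter_eq (J (n + 1) ω) (K n ω - 1) h1 (by omega), List.map_map] at htrim
    subst htrim
    refine ⟨J (n + 1) ω, ⟨h1, by simp; omega⟩, by simp; omega, rfl, ?_⟩
    intro i hi
    simp
  · rintro ⟨j, ⟨hj1, hj2⟩, hK, hJ, hW⟩
    refine ⟨?_, by omega⟩
    rw [hK, hJ, range_filter_eq j ts.length hj1 hj2, List.map_map]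
    apply List.ext_getElem (by simp)
    intro i h1' h2'
    simp only [List.getElem_map, List.getElem_range]
    exact hW i (by simpa using h1')

lemma Pset_disjoint (K J : ℕ → Ω → ℕ) (W : ℕ → ℕ → Ω → PlaneTree) (n : ℕ)
    (ts : List PlaneTree) {j j' : ℕ} (h : j ≠ j') :
    Disjoint (Pset K J W n j ts) (Pset K J W n j' ts) := by
  rw [Set.disjoint_left]
  rintro ω ⟨-, hJ, -⟩ ⟨-, hJ', -⟩
  exact h (hJ ▸ hJ')

section Meas

variable [MeasurableSpace Ω] {K J : ℕ → Ω → ℕ} {W : ℕ → ℕ → Ω → PlaneTree}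

lemma measurableSet_Pset (hK : ∀ n, Measurable (K n)) (hJ : ∀ n, Measurable (J n))
    (hW : ∀ n j, Measurable (W n j)) (n j : ℕ) (ts : List PlaneTree) :
    MeasurableSet (Pset K J W n j ts) := by
  have : Pset K J W n j ts =
      ({ω | K n ω = ts.length + 1} ∩ {ω | J (n + 1) ω = j}) ∩
        ⋂ i : Fin ts.length, {ω | W n (sigmaIdx j i) ω = ts[(i : ℕ)]} := by
    ext ω
    simp only [Pset, Set.mem_setOf_eq, Set.mem_inter_iff, Set.mem_iInter]
    constructor
    · rintro ⟨h1, h2, h3⟩; exact ⟨⟨h1, h2⟩, fun i => h3 i i.2⟩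
    · rintro ⟨⟨h1, h2⟩, h3⟩; exact ⟨h1, h2, fun i hi => h3 ⟨i, hi⟩⟩
  rw [this]
  refine (((hK n) (measurableSet_singleton _)).inter ((hJ (n + 1)) (measurableSet_singleton _))).inter
    (MeasurableSet.iInter fun i => (hW n _) (measurableSet_singleton _))

lemma measurableSet_mapList (hW : ∀ n j, Measurable (W n j)) (n : ℕ) :
    ∀ (l : List ℕ) (ts : List PlaneTree),
      MeasurableSet {ω | l.map (fun i => W n i ω) = ts}
  | [], [] => by simp
  | [], t :: ts => by
    convert MeasurableSet.empty
    ext ω; simp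
  | a :: l, [] => by
    convert MeasurableSet.empty
    ext ω; simp
  | a :: l, t :: ts => by
    have : {ω | (a :: l).map (fun i => W n i ω) = t :: ts} =
        {ω | W n a ω = t} ∩ {ω | l.map (fun i => W n i ω) = ts} := by
      ext ω; simp
    rw [this]
    exact ((hW n a) (measurableSet_singleton _)).inter (measurableSet_mapList hW n l ts)

lemma measurableSet_trim (hK : ∀ n, Measurable (K n)) (hJ : ∀ n, Measurable (J n))
    (hW : ∀ n j, Measurable (W n j)) (n : ℕ) (t : PlaneTree) :
    MeasurableSet {ω | trimAt K J W (n + 1) ω = t} := by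
  obtain ⟨ts⟩ := t
  have : {ω | trimAt K J W (n + 1) ω = PlaneTree.node ts} =
      ⋃ p : ℕ × ℕ, (({ω | K n ω = p.1} ∩ {ω | J (n + 1) ω = p.2}) ∩
        {ω | ((List.range p.1).filter (fun i => i + 1 ≠ p.2)).map (fun i => W n i ω) = ts}) := by
    ext ω
    simp only [Set.mem_setOf_eq, Set.mem_iUnion, Set.mem_inter_iff, trimAt, Nat.add_sub_cancel,
      PlaneTree.node.injEq]
    constructor
    · intro h
      exact ⟨(K n ω, J (n + 1) ω), ⟨rfl, rfl⟩, h⟩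
    · rintro ⟨p, ⟨h1, h2⟩, h3⟩
      rw [h1, h2]; exact h3
  rw [this]
  exact MeasurableSet.iUnion fun p =>
    (((hK n) (measurableSet_singleton _)).inter ((hJ (n + 1)) (measurableSet_singleton _))).inter
      (measurableSet_mapList hW n _ ts)

end Meas

instance : MeasurableSingletonClass ((ℕ × ℕ) ⊕ PlaneTree) := by
  constructor
  rintro (a | b)
  · rw [show ({Sum.inl a} : Set ((ℕ × ℕ) ⊕ PlaneTree)) = Sum.inl '' {a} by simp]
    exact (measurableSet_singleton a).inl_image
  · rw [show ({Sum.inr b} : Set ((ℕ × ℕ) ⊕ PlaneTree)) = Sum.inr '' {b} by simp]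
    exact MeasurableSet.inr_image (measurableSet_singleton b)

end Aux2

/-- In the size-biased Bienaymé tree (encoded by the spine degrees `K`, the spine
child indices `J`, and the off-spine subtrees `W`, all mutually independent, with
`ℙ(K_n = k, J_{n+1} = j) = 1_{1 ≤ j ≤ k} μ(k)` and the `W`'s distributed as
Bienaymé trees with offspring distribution `μ`), the trimmed trees
`Trim_{U_n} τ_∞`, `n ≥ 1`, are independent root-biased Bienaymé trees with
offspring distribution `μ`. -/
theorem trim_indep_rootBiased {Ω : Type*} [MeasureSpace Ω]
    [IsProbabilityMeasure (ℙ : Measure Ω)]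
    (μ : ℕ → ℝ) (hnn : ∀ k, 0 ≤ μ k) (hsum : ∑' k : ℕ, μ k = 1)
    (hcrit : ∑' k : ℕ, (k : ℝ) * μ k = 1)
    (σ2 : ℝ) (hσpos : 0 < σ2)
    (hvar : HasSum (fun k : ℕ => ((k : ℝ) - 1) ^ 2 * μ k) σ2)
    (h0 : 0 < μ 0)
    (K J : ℕ → Ω → ℕ) (W : ℕ → ℕ → Ω → PlaneTree)
    (hKmeas : ∀ n, Measurable (K n)) (hJmeas : ∀ n, Measurable (J n))
    (hWmeas : ∀ n j, Measurable (W n j))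
    (hindep : iIndepFun
      (fun idx : ℕ ⊕ (ℕ × ℕ) =>
        Sum.elim
          (fun n => fun ω => (Sum.inl (K n ω, J (n + 1) ω) : (ℕ × ℕ) ⊕ PlaneTree))
          (fun p => fun ω => (Sum.inr (W p.1 p.2 ω) : (ℕ × ℕ) ⊕ PlaneTree)) idx) ℙ)
    (hKJlaw : ∀ n k j : ℕ,
      ℙ {ω | K n ω = k ∧ J (n + 1) ω = j} =
        if 1 ≤ j ∧ j ≤ k then ENNReal.ofReal (μ k) else 0)
    (hWlaw : ∀ n j : ℕ, ∀ t : PlaneTree,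
      ℙ {ω | W n j ω = t} = ENNReal.ofReal (treeProb μ t)) :
    iIndepFun
        (fun n : ℕ => trimAt K J W (n + 1)) ℙ ∧
      ∀ n : ℕ, ∀ t : PlaneTree,
        ℙ {ω | trimAt K J W (n + 1) ω = t} = ENNReal.ofReal (rootBiasedProb μ t) := by
    classical
  set X : (ℕ ⊕ (ℕ × ℕ)) → Ω → ((ℕ × ℕ) ⊕ PlaneTree) :=
    fun idx => Sum.elim
      (fun n => fun ω => (Sum.inl (K n ω, J (n + 1) ω) : (ℕ × ℕ) ⊕ PlaneTree))
      (fun p => fun ω => (Sum.inr (W p.1 p.2 ω) : (ℕ × ℕ) ⊕ PlaneTree)) idx with hX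
  -- almost surely `1 ≤ J (n+1) ≤ K n`
  have hGnull : ∀ n : ℕ, ℙ {ω : Ω | ¬(1 ≤ J (n + 1) ω ∧ J (n + 1) ω ≤ K n ω)} = 0 := by
    intro n
    have h0' : ℙ (⋃ p : ℕ × ℕ,
        if 1 ≤ p.2 ∧ p.2 ≤ p.1 then (∅ : Set Ω)
        else {ω | K n ω = p.1 ∧ J (n + 1) ω = p.2}) = 0 := by
      apply measure_iUnion_null
      intro p
      split_ifs with h
      · exact measure_empty
      · rw [hKJlaw n p.1 p.2, if_neg h]
    refine measure_mono_null (fun ω hω => ?_) h0'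
    simp only [Set.mem_setOf_eq] at hω
    refine Set.mem_iUnion.mpr ⟨(K n ω, J (n + 1) ω), ?_⟩
    rw [if_neg hω]
    exact ⟨rfl, rfl⟩
  have hinterG : ∀ (A : Set Ω) (n : ℕ),
      ℙ (A ∩ {ω | 1 ≤ J (n + 1) ω ∧ J (n + 1) ω ≤ K n ω}) = ℙ A := by
    intro A n
    apply measure_inter_conull
    rw [Set.compl_setOf]
    exact hGnull n
  -- the single application of independence
  have hC : ∀ (s : Finset ℕ) (ts : ℕ → List PlaneTree) (f : ℕ → ℕ),
      (∀ n ∈ s, 1 ≤ f n ∧ f n ≤ (ts n).length + 1) →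
      ℙ (⋂ n ∈ s, Pset K J W n (f n) (ts n)) =
        ∏ n ∈ s, ENNReal.ofReal (μ ((ts n).length + 1) * forestProb μ (ts n)) := by
    intro s ts f hf
    set B : ℕ → Finset (ℕ ⊕ (ℕ × ℕ)) := fun n =>
      insert (Sum.inl n)
        ((Finset.range (ts n).length).image (fun i => Sum.inr (n, sigmaIdx (f n) i))) with hB
    set sets : (ℕ ⊕ (ℕ × ℕ)) → Set ((ℕ × ℕ) ⊕ PlaneTree) :=
      Sum.elim (fun n => {Sum.inl ((ts n).length + 1, f n)})
        (fun p => {Sum.inr ((ts p.1).getD (tauIdx (f p.1) p.2) (PlaneTree.node []))}) with hsets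
    have htag : ∀ n : ℕ, ∀ idx ∈ B n, Sum.elim id Prod.fst idx = n := by
      intro n idx hidx
      rw [hB] at hidx
      simp only [Finset.mem_insert, Finset.mem_image, Finset.mem_range] at hidx
      rcases hidx with rfl | ⟨i, -, rfl⟩ <;> rfl
    have hnotmem : ∀ n : ℕ, (Sum.inl n : ℕ ⊕ (ℕ × ℕ)) ∉
        (Finset.range (ts n).length).image (fun i => Sum.inr (n, sigmaIdx (f n) i)) := by
      intro n h
      simp at h
    have hdisjB : (↑s : Set ℕ).PairwiseDisjoint B := by
      intro a _ b _ hab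
      refine Finset.disjoint_left.mpr fun {idx} hia hib => ?_
      exact hab (((htag a idx hia).symm.trans (htag b idx hib)))
    have hseteq : (⋂ n ∈ s, Pset K J W n (f n) (ts n)) =
        ⋂ idx ∈ s.biUnion B, X idx ⁻¹' sets idx := by
      rw [Finset.set_biInter_biUnion]
      apply Set.iInter₂_congr
      intro n hn
      rw [hB, Finset.set_biInter_insert, Finset.set_biInter_finset_image]
      ext ω
      simp only [Pset, Set.mem_setOf_eq, Set.mem_inter_iff, Set.mem_iInter, Set.mem_preimage,
        hX, hsets, Sum.elim_inl, Sum.elim_inr, Set.mem_singleton_iff, Sum.inl.injEq,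
        Sum.inr.injEq, Prod.mk.injEq, Finset.mem_range, tauIdx_sigmaIdx]
      constructor
      · rintro ⟨h1, h2, h3⟩
        refine ⟨⟨h1, h2⟩, fun i hi => ?_⟩
        rw [List.getD_eq_getElem _ _ hi]
        exact h3 i hi
      · rintro ⟨⟨h1, h2⟩, h3⟩
        refine ⟨h1, h2, fun i hi => ?_⟩
        have := h3 i hi
        rwa [List.getD_eq_getElem _ _ hi] at this
    rw [hseteq, hindep.measure_inter_preimage_eq_mul (s.biUnion B)
        (fun idx _ => by cases idx <;> exact measurableSet_singleton _),
      Finset.prod_biUnion hdisjB]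
    apply Finset.prod_congr rfl
    intro n hn
    rw [hB]
    rw [Finset.prod_insert (hnotmem n),
      Finset.prod_image (fun i _ i' _ h => sigmaIdx_injective (f n) (by simpa using h))]
    have h1 : ℙ (X (Sum.inl n) ⁻¹' sets (Sum.inl n)) = ENNReal.ofReal (μ ((ts n).length + 1)) := by
      have he : X (Sum.inl n) ⁻¹' sets (Sum.inl n) =
          {ω | K n ω = (ts n).length + 1 ∧ J (n + 1) ω = f n} := by
        ext ω
        simp [hX, hsets, Prod.ext_iff]
      rw [he, hKJlaw, if_pos ⟨(hf n hn).1, (hf n hn).2⟩]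
    have h2 : ∀ i ∈ Finset.range (ts n).length,
        ℙ (X (Sum.inr (n, sigmaIdx (f n) i)) ⁻¹' sets (Sum.inr (n, sigmaIdx (f n) i))) =
          ENNReal.ofReal (treeProb μ ((ts n).getD i (PlaneTree.node []))) := by
      intro i _
      have he : X (Sum.inr (n, sigmaIdx (f n) i)) ⁻¹' sets (Sum.inr (n, sigmaIdx (f n) i)) =
          {ω | W n (sigmaIdx (f n) i) ω = (ts n).getD i (PlaneTree.node [])} := by
        ext ω
        simp [hX, hsets, tauIdx_sigmaIdx]
      rw [he, hWlaw]
    rw [h1, Finset.prod_congr rfl h2, ← ofReal_forestProb μ hnn (ts n),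
      ← ENNReal.ofReal_mul (hnn _)]
  -- key computation, by induction on the set of "trim" events
  have hkey : ∀ (s' : Finset ℕ) (ts : ℕ → List PlaneTree) (s : Finset ℕ) (f : ℕ → ℕ),
      Disjoint s s' → (∀ n ∈ s, 1 ≤ f n ∧ f n ≤ (ts n).length + 1) →
      ℙ ((⋂ n ∈ s, Pset K J W n (f n) (ts n)) ∩
          ⋂ n ∈ s', {ω | trimAt K J W (n + 1) ω = PlaneTree.node (ts n)}) =
        (∏ n ∈ s, ENNReal.ofReal (μ ((ts n).length + 1) * forestProb μ (ts n))) *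
          ∏ n ∈ s', ENNReal.ofReal (rootBiasedProb μ (PlaneTree.node (ts n))) := by
    intro s'
    induction s' using Finset.induction_on with
    | empty =>
      intro ts s f _ hf
      simp only [Finset.notMem_empty, Set.iInter_of_empty, Set.iInter_univ, Set.inter_univ,
        Finset.prod_empty, mul_one]
      exact hC s ts f hf
    | @insert a s' ha ih =>
      intro ts s f hdisj hf
      have haS : a ∉ s := Finset.disjoint_right.mp hdisj (Finset.mem_insert_self a s')
      have hss' : Disjoint s s' := (Finset.disjoint_insert_right.mp hdisj).2
      set Q : Set Ω := ⋂ n ∈ s, Pset K J W n (f n) (ts n) with hQ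
      set R : Set Ω := ⋂ n ∈ s', {ω | trimAt K J W (n + 1) ω = PlaneTree.node (ts n)} with hR
      have hQmeas : MeasurableSet Q :=
        Finset.measurableSet_biInter s fun n _ => measurableSet_Pset hKmeas hJmeas hWmeas n _ _
      have hRmeas : MeasurableSet R :=
        Finset.measurableSet_biInter s' fun n _ => measurableSet_trim hKmeas hJmeas hWmeas n _
      rw [Finset.set_biInter_insert]
      have hre : Q ∩ ({ω | trimAt K J W (a + 1) ω = PlaneTree.node (ts a)} ∩ R) =
          (Q ∩ R) ∩ {ω | trimAt K J W (a + 1) ω = PlaneTree.node (ts a)} := by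
        ext ω; simp only [Set.mem_inter_iff]; tauto
      rw [hre, ← hinterG _ a, Set.inter_assoc, trim_inter_eq K J W a (ts a),
        Set.inter_iUnion₂]
      have hdisjP : ((Finset.Icc 1 ((ts a).length + 1) : Finset ℕ) : Set ℕ).PairwiseDisjoint
          (fun j => (Q ∩ R) ∩ Pset K J W a j (ts a)) := by
        intro j1 _ j2 _ hne
        exact (Pset_disjoint K J W a (ts a) hne).mono Set.inter_subset_right
          Set.inter_subset_right
      have hmeasP : ∀ j ∈ Finset.Icc 1 ((ts a).length + 1),
          MeasurableSet ((Q ∩ R) ∩ Pset K J W a j (ts a)) := fun j _ =>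
        (hQmeas.inter hRmeas).inter (measurableSet_Pset hKmeas hJmeas hWmeas a _ _)
      rw [measure_biUnion_finset hdisjP hmeasP]
      have hterm : ∀ j ∈ Finset.Icc 1 ((ts a).length + 1),
          ℙ ((Q ∩ R) ∩ Pset K J W a j (ts a)) =
            (ENNReal.ofReal (μ ((ts a).length + 1) * forestProb μ (ts a)) *
              ∏ n ∈ s, ENNReal.ofReal (μ ((ts n).length + 1) * forestProb μ (ts n))) *
              ∏ n ∈ s', ENNReal.ofReal (rootBiasedProb μ (PlaneTree.node (ts n))) := by
        intro j hj
        rw [Finset.mem_Icc] at hj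
        have hupd : (⋂ n ∈ s, Pset K J W n (Function.update f a j n) (ts n)) = Q := by
          apply Set.iInter₂_congr
          intro n hn
          rw [Function.update_of_ne (ne_of_mem_of_not_mem hn haS)]
        have hQ' : (⋂ n ∈ insert a s, Pset K J W n (Function.update f a j n) (ts n)) ∩ R =
            (Q ∩ R) ∩ Pset K J W a j (ts a) := by
          rw [Finset.set_biInter_insert, Function.update_self, hupd]
          ext ω; simp only [Set.mem_inter_iff]; tauto
        have hdisj' : Disjoint (insert a s) s' :=
          Finset.disjoint_insert_left.mpr ⟨ha, hss'⟩
        have hf' : ∀ n ∈ insert a s,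
            1 ≤ Function.update f a j n ∧ Function.update f a j n ≤ (ts n).length + 1 := by
          intro n hn
          rcases Finset.mem_insert.mp hn with rfl | hn'
          · rw [Function.update_self]; exact hj
          · rw [Function.update_of_ne (ne_of_mem_of_not_mem hn' haS)]; exact hf n hn'
        rw [← hQ', ih ts (insert a s) (Function.update f a j) hdisj' hf',
          Finset.prod_insert haS]
      rw [Finset.sum_congr rfl hterm, Finset.sum_const, Nat.card_Icc, nsmul_eq_mul]
      have hcard : ((ts a).length + 1 + 1 - 1) = (ts a).length + 1 := by omega
      rw [hcard, Finset.prod_insert ha]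
      have hra : ENNReal.ofReal (rootBiasedProb μ (PlaneTree.node (ts a))) =
          ((((ts a).length + 1 : ℕ) : ENNReal)) *
            ENNReal.ofReal (μ ((ts a).length + 1) * forestProb μ (ts a)) := by
        have hcast : ((ts a).length + 1 : ℝ) = (((ts a).length + 1 : ℕ) : ℝ) := by push_cast; ring
        rw [rootBiasedProb, mul_assoc, hcast,
          ENNReal.ofReal_mul (by positivity), ENNReal.ofReal_natCast]
      rw [hra]
      ring
  -- joint law of the trimmed trees
  have hA : ∀ (s : Finset ℕ) (ts : ℕ → List PlaneTree),
      ℙ (⋂ n ∈ s, {ω | trimAt K J W (n + 1) ω = PlaneTree.node (ts n)}) =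
        ∏ n ∈ s, ENNReal.ofReal (rootBiasedProb μ (PlaneTree.node (ts n))) := by
    intro s ts
    have h := hkey s ts ∅ (fun _ => 1) (by simp) (by simp)
    simpa using h
  have hlaw : ∀ (n : ℕ) (t : PlaneTree),
      ℙ {ω | trimAt K J W (n + 1) ω = t} = ENNReal.ofReal (rootBiasedProb μ t) := by
    intro n t
    obtain ⟨ts⟩ := t
    have h := hA {n} (fun _ => ts)
    simpa using h
  refine ⟨?_, hlaw⟩
  have hmtrim : ∀ n : ℕ, Measurable (trimAt K J W (n + 1)) := by
    intro n
    apply measurable_to_countable'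
    intro t
    exact measurableSet_trim hKmeas hJmeas hWmeas n t
  rw [iIndepFun_iff_iIndep]
  refine ProbabilityTheory.iIndepSets.iIndep (fun n => (hmtrim n).comap_le)
    (fun n => {S : Set Ω | ∃ ts : List PlaneTree,
      S = {ω | trimAt K J W (n + 1) ω = PlaneTree.node ts}}) ?_ ?_ ?_
  · rintro n S1 ⟨ts1, rfl⟩ S2 ⟨ts2, rfl⟩ hne
    obtain ⟨ω, h1, h2⟩ := hne
    have h3 : PlaneTree.node ts1 = PlaneTree.node ts2 := by
      rw [← h1, ← h2]
    have h4 : ts1 = ts2 := by injection h3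
    subst h4
    rw [Set.inter_self]
    exact ⟨ts1, rfl⟩
  · intro n
    apply le_antisymm
    · intro S hS
      rw [MeasurableSpace.measurableSet_comap] at hS
      obtain ⟨A, -, rfl⟩ := hS
      rw [← Set.biUnion_preimage_singleton]
      refine MeasurableSet.biUnion (Set.to_countable A) fun t _ => ?_
      apply MeasurableSpace.measurableSet_generateFrom
      obtain ⟨ts⟩ := t
      exact ⟨ts, rfl⟩
    · apply MeasurableSpace.generateFrom_le
      rintro S ⟨ts, rfl⟩
      rw [MeasurableSpace.measurableSet_comap]
      exact ⟨{PlaneTree.node ts}, MeasurableSpace.measurableSet_top, rfl⟩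
  · rw [iIndepSets_iff]
    intro s E hE
    have hch : ∀ n : ℕ, ∃ ts : List PlaneTree,
        n ∈ s → E n = {ω | trimAt K J W (n + 1) ω = PlaneTree.node ts} := by
      intro n
      by_cases hn : n ∈ s
      · obtain ⟨ts, h⟩ := hE n hn
        exact ⟨ts, fun _ => h⟩
      · exact ⟨[], fun h => absurd h hn⟩
    choose ts hts using hch
    have h1 : (⋂ n ∈ s, E n) =
        ⋂ n ∈ s, {ω | trimAt K J W (n + 1) ω = PlaneTree.node (ts n)} :=
      Set.iInter₂_congr hts
    rw [h1, hA s ts]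
    exact (Finset.prod_congr rfl fun n hn => by rw [hts n hn, hlaw]).symm
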